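/- Theorem 3.1(1), trace-norm separation: For every state ρ on ℂ^{d_1} ⊗ ⋯ ⊗ ℂ^{d_n}, inf_{σ ∈ 𝒫} ‖ρ − σ‖₁ ≥ Δ_B(ρ) / ( m + ∑_{1 ≤ i < j ≤ m} φ^{(n)}_{ij} )^{1/2}. -/

import Mathlib

/-!
Hölder's inequality `|Re Tr((ρ - σ) B)| ≤ ‖ρ - σ‖₁ ‖B‖`, together with `Tr(σ B) ≤ Γ_prod(B)` for
product states `σ`, gives `Δ_B(ρ) ≤ ‖ρ - σ‖₁ ‖B‖`, so it suffices to bound `‖B‖² = ‖B²‖`.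
The diagonal terms of `B²` have norm at most one. For `i < j`, write factorwise
`a_i a_j = ({a_i, a_j} + [a_i, a_j]) / 2` and `a_j a_i = ({a_i, a_j} - [a_i, a_j]) / 2`;
expanding both Kronecker products over the set `S` of factors that carry a commutator, the terms
with `|S|` odd cancel, and the remaining ones are bounded by `φ_ij` since the operator norm is
submultiplicative under Kronecker products.
-/

open scoped BigOperators ComplexOrder

namespace Parity

variable {n : ℕ} {d : Fin n → ℕ}

/-- Kronecker product of `n` matrices, as a matrix over the product index set. -/
def kron (a : ∀ r : Fin n, Matrix (Fin (d r)) (Fin (d r)) ℂ) :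
    Matrix (∀ r, Fin (d r)) (∀ r, Fin (d r)) ℂ :=
  fun i j => ∏ r, a r (i r) (j r)

/-- The ℓ²-operator norm of a complex matrix. -/
noncomputable def opNorm {I : Type*} [Fintype I] [DecidableEq I] (A : Matrix I I ℂ) : ℝ :=
  ‖Matrix.toEuclideanCLM (𝕜 := ℂ) A‖

/-- The defect weight φ⁽ⁿ⁾ᵢⱼ. -/
noncomputable def phi {m : ℕ} (a : ∀ r : Fin n, Fin m → Matrix (Fin (d r)) (Fin (d r)) ℂ)
    (i j : Fin m) : ℝ :=
  (2 : ℝ) ^ ((1 : ℤ) - n) *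
    ∑ S ∈ Finset.univ.filter (fun S : Finset (Fin n) => Even S.card),
      (∏ r ∈ S, opNorm (a r i * a r j - a r j * a r i)) *
        (∏ r ∈ Sᶜ, opNorm (a r i * a r j + a r j * a r i))

/-- A state: positive semidefinite with trace one. -/
def IsState {I : Type*} [Fintype I] (ρ : Matrix I I ℂ) : Prop :=
  ρ.PosSemidef ∧ ρ.trace = 1

/-- The trace norm `Tr √(AᴴA)`. -/
noncomputable def traceNorm {I : Type*} [Fintype I] [DecidableEq I] (A : Matrix I I ℂ) : ℝ :=
  (((Matrix.posSemidef_conjTranspose_mul_self A).1.eigenvectorUnitary : Matrix I I ℂ) *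
      Matrix.diagonal (fun i => ((√((Matrix.posSemidef_conjTranspose_mul_self A).1.eigenvalues i) : ℝ) : ℂ)) *
      (star (Matrix.posSemidef_conjTranspose_mul_self A).1.eigenvectorUnitary : Matrix I I ℂ)).trace.re

/-- Logarithm of a Hermitian matrix via the functional calculus (junk value otherwise);
an eigenvalue `0` contributes `Real.log 0 = 0`. -/
noncomputable def mlog {I : Type*} [Fintype I] [DecidableEq I] (A : Matrix I I ℂ) :
    Matrix I I ℂ :=
  if hA : A.IsHermitian then
    (hA.eigenvectorUnitary : Matrix I I ℂ) *
      Matrix.diagonal (fun i => (Real.log (hA.eigenvalues i) : ℂ)) *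
      (star hA.eigenvectorUnitary : Matrix I I ℂ)
  else 0

/-- Quantum relative entropy `D(ρ‖σ) = Tr(ρ (log ρ − log σ))` (natural logarithm). -/
noncomputable def relEntropy {I : Type*} [Fintype I] [DecidableEq I] (ρ σ : Matrix I I ℂ) : ℝ :=
  (Matrix.trace (ρ * (mlog ρ - mlog σ))).re

/-- The `r`-th marginal (partial trace over all other factors). -/
noncomputable def marginal (ρ : Matrix (∀ r, Fin (d r)) (∀ r, Fin (d r)) ℂ) (r : Fin n) :
    Matrix (Fin (d r)) (Fin (d r)) ℂ :=
  fun a b => ∑ k : ∀ s, Fin (d s), if k r = a then ρ k (Function.update k r b) else 0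

/-- Total correlation `I_tot(ρ) = D(ρ‖ρ₁ ⊗ ⋯ ⊗ ρₙ)`. -/
noncomputable def Itot (ρ : Matrix (∀ r, Fin (d r)) (∀ r, Fin (d r)) ℂ) : ℝ :=
  relEntropy ρ (kron (fun r => marginal ρ r))

/-- The set of product states. -/
def ProdStates (d : Fin n → ℕ) : Set (Matrix (∀ r, Fin (d r)) (∀ r, Fin (d r)) ℂ) :=
  {σ | ∃ s : ∀ r : Fin n, Matrix (Fin (d r)) (Fin (d r)) ℂ,
    (∀ r, IsState (s r)) ∧ σ = kron s}

/-- The product threshold `Γ_prod(B)`. -/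
noncomputable def Gamma (d : Fin n → ℕ) (B : Matrix (∀ r, Fin (d r)) (∀ r, Fin (d r)) ℂ) : ℝ :=
  sSup {x : ℝ | ∃ σ ∈ ProdStates d, x = (Matrix.trace (σ * B)).re}

/-- The excess `Δ_B(ρ)`. -/
noncomputable def excess (d : Fin n → ℕ) (B ρ : Matrix (∀ r, Fin (d r)) (∀ r, Fin (d r)) ℂ) : ℝ :=
  max ((Matrix.trace (ρ * B)).re - Gamma d B) 0

end Parity

open Matrix
open scoped Matrix.Norms.L2Operator MatrixOrder

theorem Finset.prod_apply_piecewise {ι M : Type*} {π : ι → Type*} [Fintype ι] [DecidableEq ι]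
    [CommMonoid M] (S : Finset ι) (f g : ∀ i, π i) (F : ∀ i, π i → M) :
    ∏ i, F i (S.piecewise f g i) = (∏ i ∈ S, F i (f i)) * ∏ i ∈ Sᶜ, F i (g i) := by
  rw [← Finset.prod_mul_prod_compl S]
  congr 1 <;> refine Finset.prod_congr rfl fun i hi => ?_
  · rw [S.piecewise_eq_of_mem _ _ hi]
  · rw [S.piecewise_eq_of_notMem _ _ (Finset.mem_compl.mp hi)]

theorem Finset.sum_sum_eq_sum_add_sum_lt {ι M : Type*} [Fintype ι] [LinearOrder ι]
    [AddCommMonoid M] (f : ι → ι → M) :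
    ∑ i, ∑ j, f i j =
      ∑ i, f i i + ∑ i, ∑ j ∈ Finset.univ.filter (fun j => i < j), (f i j + f j i) := by
  have htri : ∀ i j, f i j = (if i = j then f i j else 0) +
      ((if i < j then f i j else 0) + if j < i then f i j else 0) := fun i j => by
    rcases lt_trichotomy i j with h | rfl | h
    · simp [h, h.ne, h.not_gt]
    · simp
    · simp [h, h.ne', h.not_gt]
  simp_rw [Finset.sum_congr rfl fun i _ => Finset.sum_congr rfl fun j _ => htri i j,
    Finset.sum_add_distrib, Finset.sum_ite_eq, Finset.mem_univ, if_true]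
  rw [Finset.sum_comm (f := fun i j => if j < i then f i j else 0)]
  simp only [Finset.sum_filter]

theorem Matrix.norm_entry_le_l2_opNorm {𝕜 m n : Type*} [RCLike 𝕜] [Fintype m] [Fintype n]
    [DecidableEq n] (A : Matrix m n 𝕜) (i : m) (j : n) : ‖A i j‖ ≤ ‖A‖ := by
  set e : EuclideanSpace 𝕜 n := EuclideanSpace.single j 1
  have hA : A i j = (EuclideanSpace.equiv m 𝕜).symm (A *ᵥ e) i := by simp [e]
  calc ‖A i j‖ ≤ ‖(EuclideanSpace.equiv m 𝕜).symm (A *ᵥ e)‖ := hA ▸ PiLp.norm_apply_le _ i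
    _ ≤ ‖A‖ * ‖e‖ := l2_opNorm_mulVec A e
    _ = ‖A‖ := by simp [e]

theorem Matrix.trace_conjStarAlgAut_mul {𝕜 n : Type*} [RCLike 𝕜] [Fintype n] [DecidableEq n]
    (U : unitary (Matrix n n 𝕜)) (D Y : Matrix n n 𝕜) :
    (Unitary.conjStarAlgAut 𝕜 _ U D * Y).trace =
      (D * (star (U : Matrix n n 𝕜) * Y * U)).trace := by
  rw [Unitary.conjStarAlgAut_apply, mul_assoc, mul_assoc, trace_mul_comm]
  simp only [mul_assoc]

theorem Matrix.IsHermitian.trace_cfc {𝕜 n : Type*} [RCLike 𝕜] [Fintype n] [DecidableEq n]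
    {A : Matrix n n 𝕜} (hA : A.IsHermitian) (f : ℝ → ℝ) :
    (cfc f A).trace = ∑ k, (f (hA.eigenvalues k) : 𝕜) := by
  rw [hA.cfc_eq, IsHermitian.cfc, ← mul_one (Unitary.conjStarAlgAut 𝕜 _ _ _),
    trace_conjStarAlgAut_mul]
  simp [trace_diagonal]

namespace Parity

section TraceNorm

variable {I : Type*} [Fintype I] [DecidableEq I]

theorem opNorm_eq_norm (A : Matrix I I ℂ) : opNorm A = ‖A‖ :=
  l2_opNorm_toEuclideanCLM A

theorem traceNorm_eq_re_trace_abs (A : Matrix I I ℂ) : traceNorm A = (CFC.abs A).trace.re := by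
  have h0 : (0 : Matrix I I ℂ) ≤ Aᴴ * A := (posSemidef_conjTranspose_mul_self A).nonneg
  rw [CFC.abs, star_eq_conjTranspose, CFC.sqrt_eq_real_sqrt _ h0, cfcₙ_eq_cfc,
    (posSemidef_conjTranspose_mul_self A).1.cfc_eq, IsHermitian.cfc, Unitary.conjStarAlgAut_apply]
  rfl

theorem traceNorm_nonneg (A : Matrix I I ℂ) : 0 ≤ traceNorm A := by
  rw [traceNorm_eq_re_trace_abs]
  exact (Complex.nonneg_iff.mp (CFC.abs_nonneg A).posSemidef.trace_nonneg).1

theorem _root_.Matrix.IsHermitian.traceNorm_eq_sum_abs_eigenvalues {X : Matrix I I ℂ}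
    (hX : X.IsHermitian) : traceNorm X = ∑ k, |hX.eigenvalues k| := by
  rw [traceNorm_eq_re_trace_abs, CFC.abs_eq_cfc_norm X hX, hX.trace_cfc, Complex.re_sum]
  simp

theorem _root_.Matrix.IsHermitian.abs_re_trace_mul_le {X : Matrix I I ℂ} (hX : X.IsHermitian)
    (Y : Matrix I I ℂ) : |(X * Y).trace.re| ≤ traceNorm X * ‖Y‖ := by
  set U := hX.eigenvectorUnitary
  have hdiag : ∀ k, ‖(star (U : Matrix I I ℂ) * Y * U) k k‖ ≤ ‖Y‖ := fun k =>
    (norm_entry_le_l2_opNorm _ k k).trans_eq <| by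
      rw [CStarRing.norm_mul_coe_unitary, CStarRing.norm_mem_unitary_mul _ (Unitary.star_mem U.2)]
  rw [hX.traceNorm_eq_sum_abs_eigenvalues, Finset.sum_mul]
  conv_lhs => rw [hX.spectral_theorem, trace_conjStarAlgAut_mul]
  simp only [trace, diag, diagonal_mul, Function.comp_apply, Complex.re_sum]
  refine (Finset.abs_sum_le_sum_abs _ _).trans (Finset.sum_le_sum fun k _ => ?_)
  calc _ ≤ ‖(hX.eigenvalues k : ℂ) * (star (U : Matrix I I ℂ) * Y * U) k k‖ :=
        Complex.abs_re_le_norm _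
    _ = |hX.eigenvalues k| * ‖(star (U : Matrix I I ℂ) * Y * U) k k‖ := by
        rw [norm_mul, Complex.norm_real, Real.norm_eq_abs]
    _ ≤ |hX.eigenvalues k| * ‖Y‖ := mul_le_mul_of_nonneg_left (hdiag k) (abs_nonneg _)

theorem IsState.traceNorm_eq_one {σ : Matrix I I ℂ} (hσ : IsState σ) : traceNorm σ = 1 := by
  rw [traceNorm_eq_re_trace_abs, CFC.abs_of_nonneg σ hσ.1.nonneg, hσ.2, Complex.one_re]

theorem isState_inv_card_smul_one [Nonempty I] :
    IsState ((Fintype.card I : ℂ)⁻¹ • (1 : Matrix I I ℂ)) := by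
  refine ⟨PosSemidef.one.smul (by positivity), ?_⟩
  rw [trace_smul, trace_one, smul_eq_mul,
    inv_mul_cancel₀ (Nat.cast_ne_zero.mpr Fintype.card_ne_zero)]

end TraceNorm

section Kron

variable {n : ℕ} {d : Fin n → ℕ}

theorem kron_mul (a b : ∀ r : Fin n, Matrix (Fin (d r)) (Fin (d r)) ℂ) :
    kron a * kron b = kron (fun r => a r * b r) := by
  ext i j
  simp only [mul_apply, kron, Finset.prod_univ_sum, Fintype.piFinset_univ,
    Finset.prod_mul_distrib]

theorem kron_conjTranspose (a : ∀ r : Fin n, Matrix (Fin (d r)) (Fin (d r)) ℂ) :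
    (kron a)ᴴ = kron (fun r => (a r)ᴴ) := by
  ext i j
  simp only [conjTranspose_apply, kron, star_prod]

theorem kron_isHermitian {a : ∀ r : Fin n, Matrix (Fin (d r)) (Fin (d r)) ℂ}
    (h : ∀ r, (a r).IsHermitian) : (kron a).IsHermitian := by
  rw [IsHermitian, kron_conjTranspose]
  exact congrArg kron (funext h)

theorem trace_kron (a : ∀ r : Fin n, Matrix (Fin (d r)) (Fin (d r)) ℂ) :
    (kron a).trace = ∏ r, (a r).trace := by
  simp only [trace, diag, kron, Finset.prod_univ_sum, Fintype.piFinset_univ]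

theorem kron_smul (z : Fin n → ℂ) (a : ∀ r : Fin n, Matrix (Fin (d r)) (Fin (d r)) ℂ) :
    kron (fun r => z r • a r) = (∏ r, z r) • kron a := by
  ext i j
  simp only [kron, Matrix.smul_apply, smul_eq_mul, Finset.prod_mul_distrib]

theorem kron_algebraMap (c : Fin n → ℝ) :
    kron (fun r => algebraMap ℝ (Matrix (Fin (d r)) (Fin (d r)) ℂ) (c r)) =
      algebraMap ℝ _ (∏ r, c r) := by
  ext i j
  simp only [kron, algebraMap_matrix_apply, Fintype.prod_ite_zero, ← funext_iff, map_prod]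

theorem kron_add (x y : ∀ r : Fin n, Matrix (Fin (d r)) (Fin (d r)) ℂ) :
    kron (x + y) = ∑ S : Finset (Fin n), kron (S.piecewise x y) := by
  ext i j
  simp only [kron, Pi.add_apply, Matrix.add_apply, Matrix.sum_apply]
  rw [Finset.prod_add, Finset.powerset_univ]
  refine Finset.sum_congr rfl fun S _ => ?_
  rw [← Finset.compl_eq_univ_sdiff, Finset.prod_apply_piecewise S x y fun r M => M (i r) (j r)]

theorem kron_nonneg {p : ∀ r : Fin n, Matrix (Fin (d r)) (Fin (d r)) ℂ} (hp : ∀ r, 0 ≤ p r) :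
    0 ≤ kron p := by
  have hsqrt : kron p = (kron fun r => CFC.sqrt (p r))ᴴ * kron fun r => CFC.sqrt (p r) := by
    rw [kron_conjTranspose, kron_mul]
    congr 1
    funext r
    rw [← star_eq_conjTranspose, (CFC.sqrt_nonneg (p r)).isSelfAdjoint.star_eq,
      CFC.sqrt_mul_sqrt_self _ (hp r)]
  rw [hsqrt]
  exact star_mul_self_nonneg _

theorem kron_mono {p q : ∀ r : Fin n, Matrix (Fin (d r)) (Fin (d r)) ℂ} (hp : ∀ r, 0 ≤ p r)
    (hpq : ∀ r, p r ≤ q r) : kron p ≤ kron q := by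
  classical
  -- expand `q = (q - p) + p`: the term `S = ∅` is `kron p`, all others are `≥ 0`
  rw [← sub_add_cancel q p, kron_add, ← Finset.add_sum_erase _ _ (Finset.mem_univ ∅),
    Finset.piecewise_empty]
  refine le_add_of_nonneg_right (Finset.sum_nonneg fun S _ => kron_nonneg fun r => ?_)
  by_cases hr : r ∈ S
  · simpa [hr] using sub_nonneg.mpr (hpq r)
  · simpa [hr] using hp r

theorem norm_kron_le (a : ∀ r : Fin n, Matrix (Fin (d r)) (Fin (d r)) ℂ) :
    ‖kron a‖ ≤ ∏ r, ‖a r‖ := by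
  have hsq : (kron a)ᴴ * kron a ≤ algebraMap ℝ _ ((∏ r, ‖a r‖) ^ 2) := by
    rw [kron_conjTranspose, kron_mul, ← Finset.prod_pow, ← kron_algebraMap]
    exact kron_mono (fun r => star_mul_self_nonneg _)
      fun r => CStarAlgebra.star_mul_le_algebraMap_norm_sq
  have hprod : 0 ≤ ∏ r, ‖a r‖ := Finset.prod_nonneg fun r _ => norm_nonneg _
  rw [← CStarAlgebra.norm_le_iff_le_algebraMap _ (by positivity) (star_mul_self_nonneg _),
    l2_opNorm_conjTranspose_mul_self, ← pow_two] at hsq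
  exact (pow_le_pow_iff_left₀ (norm_nonneg _) hprod two_ne_zero).mp hsq

theorem kron_piecewise_neg (S : Finset (Fin n))
    (c s : ∀ r : Fin n, Matrix (Fin (d r)) (Fin (d r)) ℂ) :
    kron (S.piecewise (-c) s) = (-1 : ℂ) ^ S.card • kron (S.piecewise c s) := by
  ext i j
  simp only [kron, Matrix.smul_apply, smul_eq_mul]
  rw [Finset.prod_apply_piecewise S (-c) s fun r M => M (i r) (j r),
    Finset.prod_apply_piecewise S c s fun r M => M (i r) (j r)]
  simp only [Pi.neg_apply, Matrix.neg_apply, Finset.prod_neg]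
  ring

theorem kron_add_add_kron_neg_add (c s : ∀ r : Fin n, Matrix (Fin (d r)) (Fin (d r)) ℂ) :
    kron (c + s) + kron (-c + s) =
      ∑ S ∈ Finset.univ.filter (fun S : Finset (Fin n) => Even S.card),
        (2 : ℂ) • kron (S.piecewise c s) := by
  rw [kron_add, kron_add, ← Finset.sum_add_distrib, Finset.sum_filter]
  refine Finset.sum_congr rfl fun S _ => ?_
  rw [kron_piecewise_neg]
  rcases Nat.even_or_odd S.card with h | h
  · rw [if_pos h, h.neg_one_pow, one_smul, two_smul]
  · rw [if_neg (Nat.not_even_iff_odd.mpr h), h.neg_one_pow, neg_one_smul, add_neg_cancel]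

theorem norm_kron_mul_add_kron_mul_le (x y : ∀ r : Fin n, Matrix (Fin (d r)) (Fin (d r)) ℂ) :
    ‖kron (fun r => x r * y r) + kron (fun r => y r * x r)‖ ≤
      (2 : ℝ) ^ ((1 : ℤ) - n) *
        ∑ S ∈ Finset.univ.filter (fun S : Finset (Fin n) => Even S.card),
          (∏ r ∈ S, ‖x r * y r - y r * x r‖) * ∏ r ∈ Sᶜ, ‖x r * y r + y r * x r‖ := by
  set c : ∀ r : Fin n, Matrix (Fin (d r)) (Fin (d r)) ℂ := fun r => x r * y r - y r * x r
  set s : ∀ r : Fin n, Matrix (Fin (d r)) (Fin (d r)) ℂ := fun r => x r * y r + y r * x r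
  have hxy : (fun r => x r * y r) = fun r => (2⁻¹ : ℂ) • (c + s) r := by
    funext r; simp only [c, s, Pi.add_apply]; module
  have hyx : (fun r => y r * x r) = fun r => (2⁻¹ : ℂ) • (-c + s) r := by
    funext r; simp only [c, s, Pi.add_apply, Pi.neg_apply]; module
  have hterm : ∀ S : Finset (Fin n), ‖(2 : ℂ) • kron (S.piecewise c s)‖ ≤
      2 * ((∏ r ∈ S, ‖c r‖) * ∏ r ∈ Sᶜ, ‖s r‖) := fun S => by
    rw [norm_smul, Complex.norm_ofNat, ← Finset.prod_apply_piecewise S c s fun _ M => ‖M‖]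
    exact mul_le_mul_of_nonneg_left (norm_kron_le _) zero_le_two
  have hconst : ‖∏ _r : Fin n, (2⁻¹ : ℂ)‖ * 2 = (2 : ℝ) ^ ((1 : ℤ) - n) := by
    rw [zpow_sub₀ two_ne_zero, zpow_one, zpow_natCast]
    simp [div_eq_inv_mul]
  rw [hxy, hyx, kron_smul, kron_smul, ← smul_add, kron_add_add_kron_neg_add, norm_smul, ← hconst,
    mul_assoc, Finset.mul_sum]
  gcongr
  exact (norm_sum_le _ _).trans (Finset.sum_le_sum fun S _ => hterm S)

end Kron

variable {n : ℕ} {d : Fin n → ℕ}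

theorem norm_sum_kron_le {m : ℕ} (a : ∀ r : Fin n, Fin m → Matrix (Fin (d r)) (Fin (d r)) ℂ)
    (ha_sa : ∀ r i, (a r i).IsHermitian) (ha_norm : ∀ r i, ‖a r i‖ ≤ 1) :
    ‖∑ i, kron (fun r => a r i)‖ ≤
      √(m + ∑ i : Fin m, ∑ j ∈ Finset.univ.filter (fun j => i < j), phi a i j) := by
  set B := ∑ i, kron (fun r => a r i)
  have hB : Bᴴ = B := by
    simp only [B, conjTranspose_sum, fun i => (kron_isHermitian fun r => ha_sa r i).eq]
  have hdiag : ∀ i, ‖kron (fun r => a r i * a r i)‖ ≤ 1 := fun i =>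
    (norm_kron_le _).trans <| Finset.prod_le_one (fun _ _ => norm_nonneg _) fun r _ =>
      (norm_mul_le _ _).trans (mul_le_one₀ (ha_norm r i) (norm_nonneg _) (ha_norm r i))
  have hpair : ∀ i j, ‖kron (fun r => a r i * a r j) + kron (fun r => a r j * a r i)‖ ≤
      phi a i j := fun i j =>
    (norm_kron_mul_add_kron_mul_le _ _).trans_eq (by simp only [phi, opNorm_eq_norm])
  have hsq : ‖B‖ * ‖B‖ ≤
      m + ∑ i : Fin m, ∑ j ∈ Finset.univ.filter (fun j => i < j), phi a i j := by
    rw [← l2_opNorm_conjTranspose_mul_self, hB, Finset.sum_mul_sum]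
    simp only [kron_mul]
    rw [Finset.sum_sum_eq_sum_add_sum_lt]
    refine (norm_add_le _ _).trans (add_le_add ?_ ?_)
    · exact (norm_sum_le _ _).trans ((Finset.sum_le_sum fun i _ => hdiag i).trans (by simp))
    · exact (norm_sum_le _ _).trans (Finset.sum_le_sum fun i _ =>
        (norm_sum_le _ _).trans (Finset.sum_le_sum fun j _ => hpair i j))
  exact Real.le_sqrt_of_sq_le (by rw [sq]; exact hsq)

theorem isState_of_mem_prodStates {σ : Matrix (∀ r, Fin (d r)) (∀ r, Fin (d r)) ℂ}
    (hσ : σ ∈ ProdStates d) : IsState σ := by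
  obtain ⟨s, hs, rfl⟩ := hσ
  refine ⟨(kron_nonneg fun r => (hs r).1.nonneg).posSemidef, ?_⟩
  rw [trace_kron]
  exact Finset.prod_eq_one fun r _ => (hs r).2

theorem prodStates_nonempty (hd : ∀ r, 1 ≤ d r) : (ProdStates d).Nonempty :=
  have (r : Fin n) : Nonempty (Fin (d r)) := Fin.pos_iff_nonempty.mp (hd r)
  ⟨_, _, fun _ => isState_inv_card_smul_one, rfl⟩

theorem re_trace_mul_le_Gamma (B : Matrix (∀ r, Fin (d r)) (∀ r, Fin (d r)) ℂ)
    {σ : Matrix (∀ r, Fin (d r)) (∀ r, Fin (d r)) ℂ} (hσ : σ ∈ ProdStates d) :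
    (σ * B).trace.re ≤ Gamma d B := by
  refine le_csSup ⟨‖B‖, ?_⟩ ⟨σ, hσ, rfl⟩
  rintro _ ⟨τ, hτ, rfl⟩
  have hτ' := isState_of_mem_prodStates hτ
  simpa [hτ'.traceNorm_eq_one] using (le_abs_self _).trans (hτ'.1.1.abs_re_trace_mul_le B)

theorem excess_le_traceNorm_mul_norm (B : Matrix (∀ r, Fin (d r)) (∀ r, Fin (d r)) ℂ)
    {ρ σ : Matrix (∀ r, Fin (d r)) (∀ r, Fin (d r)) ℂ} (hρ : ρ.IsHermitian)
    (hσ : σ ∈ ProdStates d) : excess d B ρ ≤ traceNorm (ρ - σ) * ‖B‖ := by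
  have hholder := (hρ.sub (isState_of_mem_prodStates hσ).1.1).abs_re_trace_mul_le B
  rw [sub_mul, trace_sub, Complex.sub_re] at hholder
  refine max_le ?_ (mul_nonneg (traceNorm_nonneg _) (norm_nonneg _))
  linarith [re_trace_mul_le_Gamma B hσ, le_abs_self ((ρ * B).trace.re - (σ * B).trace.re)]

end Parity

open Parity in
theorem trace_norm_separation_general
    {n m : ℕ} {d : Fin n → ℕ} (hd : ∀ r, 1 ≤ d r)
    (a : ∀ r : Fin n, Fin m → Matrix (Fin (d r)) (Fin (d r)) ℂ)
    (ha_sa : ∀ r i, (a r i).IsHermitian)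
    (ha_norm : ∀ r i, opNorm (a r i) ≤ 1)
    (ρ : Matrix (∀ r, Fin (d r)) (∀ r, Fin (d r)) ℂ) (hρ : IsState ρ) :
    excess d (∑ i : Fin m, kron (fun r => a r i)) ρ /
        Real.sqrt (m + ∑ i : Fin m, ∑ j ∈ Finset.univ.filter (fun j => i < j), phi a i j) ≤
      sInf {x : ℝ | ∃ σ ∈ ProdStates d,
        x = traceNorm (ρ - σ)} := by
  set B := ∑ i : Fin m, kron (fun r => a r i)
  obtain ⟨σ₀, hσ₀⟩ := prodStates_nonempty hd
  refine le_csInf ⟨_, σ₀, hσ₀, rfl⟩ ?_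
  rintro _ ⟨σ, hσ, rfl⟩
  refine div_le_of_le_mul₀ (Real.sqrt_nonneg _) (traceNorm_nonneg _) ?_
  calc excess d B ρ ≤ traceNorm (ρ - σ) * ‖B‖ := excess_le_traceNorm_mul_norm B hρ.1.1 hσ
    _ ≤ _ := mul_le_mul_of_nonneg_left
        (norm_sum_kron_le a ha_sa fun r i => opNorm_eq_norm (a r i) ▸ ha_norm r i)
        (traceNorm_nonneg _)

open Parity in
/-- Theorem 3.1(1): trace-norm separation from the product states. -/
theorem trace_norm_separation
    {n m : ℕ} {d : Fin n → ℕ} (hn : 1 ≤ n) (hd : ∀ r, 1 ≤ d r) (hm : 1 ≤ m)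
    (a : ∀ r : Fin n, Fin m → Matrix (Fin (d r)) (Fin (d r)) ℂ)
    (ha_sa : ∀ r i, (a r i).IsHermitian)
    (ha_norm : ∀ r i, opNorm (a r i) ≤ 1)
    (ρ : Matrix (∀ r, Fin (d r)) (∀ r, Fin (d r)) ℂ) (hρ : IsState ρ) :
    excess d (∑ i : Fin m, kron (fun r => a r i)) ρ /
        Real.sqrt (m + ∑ i : Fin m, ∑ j ∈ Finset.univ.filter (fun j => i < j), phi a i j) ≤
      sInf {x : ℝ | ∃ σ ∈ ProdStates d,
        x = traceNorm (ρ - σ)} :=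
  trace_norm_separation_general hd a ha_sa ha_norm ρ hρ
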